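/- For every integer p ≥ 1 and k ∈ {1,2,3}, twice the area of the dilated polar polygon ℓ_p·Q̊_p^[k] equals: for k = 1, (p+1)(p+3)²/4 if p is odd and (p+1)(p+3)² if p is even; for k = 2, (p+1)(p²+5p+8)/4 if p is odd and (p+1)(p²+5p+8) if p is even; for k = 3, (p+1)(p²+4p+7)/4 if p is odd and (p+1)(p²+4p+7) if p is even. -/

import Mathlib

open Pointwise

/-- Q_p^[1] := conv({(1,−1),(p,1),(−1,0)}). -/
def Qpoly1 (p : ℤ) : Set (ℝ × ℝ) :=
  convexHull ℝ ({(1, -1), ((p : ℝ), 1), (-1, 0)} : Set (ℝ × ℝ))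

/-- Q_p^[2] := conv({(1,−1),(p,1),(p−1,1),(−1,0)}). -/
def Qpoly2 (p : ℤ) : Set (ℝ × ℝ) :=
  convexHull ℝ ({(1, -1), ((p : ℝ), 1), ((p : ℝ) - 1, 1), (-1, 0)} : Set (ℝ × ℝ))

/-- Q_p^[3] := conv({(1,−1),(p,1),(p−1,1),(−1,0),(0,−1)}). -/
def Qpoly3 (p : ℤ) : Set (ℝ × ℝ) :=
  convexHull ℝ ({(1, -1), ((p : ℝ), 1), ((p : ℝ) - 1, 1), (-1, 0), (0, -1)} : Set (ℝ × ℝ))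

/-- Q_p^[k] for k ∈ {1,2,3}. -/
def Qpoly (p : ℤ) (k : ℕ) : Set (ℝ × ℝ) :=
  if k = 1 then Qpoly1 p else if k = 2 then Qpoly2 p else Qpoly3 p

/-- The lattice ℤ² viewed inside ℝ². -/
def latticePts : Set (ℝ × ℝ) := {x | ∃ m n : ℤ, x = ((m : ℝ), (n : ℝ))}

/-- The polar polygon Q̊ := {y : ⟨y,x⟩ ≥ −1 for all x ∈ Q}. -/
def polar2 (Q : Set (ℝ × ℝ)) : Set (ℝ × ℝ) :=
  {y | ∀ x ∈ Q, -1 ≤ y.1 * x.1 + y.2 * x.2}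

/-- ℓ_p := (p+1)/2 if p is odd, p+1 if p is even. -/
def ellp (p : ℤ) : ℤ := if Odd p then (p + 1) / 2 else p + 1


/-! The polar of a convex hull is the polar of its vertex set, so `Q̊_p^[k]` is cut out by one
half-plane per vertex of `Q_p^[k]`. Over `a ∈ [-2/(p+1), 1]` it is the region between a lower and
an upper piecewise linear boundary, whose vertical width is `(p+1)a + 2` for `a ≤ 0` and
`(p+2-k)a + 2` for `a ≥ 0`. Integrating the width gives the area `2/(p+1) + (p+6-k)/2`, and
dilating by `ℓ_p` multiplies it by `ℓ_p²`. -/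

open MeasureTheory Set

theorem polar2_convexHull (S : Set (ℝ × ℝ)) : polar2 (convexHull ℝ S) = polar2 S := by
  refine (Set.ext fun y => ⟨fun h x hx => h x (subset_convexHull ℝ S hx), fun h => ?_⟩)
  have hlin : IsLinearMap ℝ (fun x : ℝ × ℝ => y.1 * x.1 + y.2 * x.2) := by
    constructor <;> intros <;>
      simp only [Prod.fst_add, Prod.snd_add, Prod.smul_fst, Prod.smul_snd, smul_eq_mul] <;> ring
  exact fun x hx => convexHull_min h (convex_halfSpace_ge hlin (-1)) hx

theorem volume_region_between_cc_eq_lintegral {α : Type*} [MeasurableSpace α] {μ : Measure α}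
    {f g : α → ℝ} {s : Set α} (hf : Measurable f) (hg : Measurable g) (hs : MeasurableSet s) :
    μ.prod volume {p : α × ℝ | p.1 ∈ s ∧ p.2 ∈ Icc (f p.1) (g p.1)} =
      ∫⁻ x in s, ENNReal.ofReal (g x - f x) ∂μ := by
  classical
  rw [Measure.prod_apply (measurableSet_region_between_cc hf hg hs), ← lintegral_indicator hs]
  congr with x
  by_cases hx : x ∈ s
  · simp [hx, ← Real.volume_Icc, Icc_def]
  · simp [hx]

theorem integral_affine (a b c d : ℝ) :
    ∫ x in a..b, (c * x + d) = (b - a) * (c * (a + b) / 2 + d) := by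
  rw [intervalIntegral.integral_add (intervalIntegral.intervalIntegrable_id.const_mul c)
    intervalIntegrable_const, intervalIntegral.integral_const_mul, integral_id,
    intervalIntegral.integral_const, smul_eq_mul]
  ring

theorem integral_affine_sub_mul_max (lo hi c d m : ℝ) (hlo : lo ≤ 0) (hhi : 0 ≤ hi) :
    ∫ x in lo..hi, (c * x + d - m * max x 0) =
      -lo * (c * lo / 2 + d) + hi * ((c - m) * hi / 2 + d) := by
  have hcont : Continuous fun x : ℝ => c * x + d - m * max x 0 := by fun_prop
  have hleft : ∫ x in lo..0, (c * x + d - m * max x 0) = ∫ x in lo..0, (c * x + d) :=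
    intervalIntegral.integral_congr fun x hx => by
      rw [uIcc_of_le hlo] at hx
      simp [max_eq_right hx.2]
  have hright : ∫ x in 0..hi, (c * x + d - m * max x 0) = ∫ x in 0..hi, ((c - m) * x + d) :=
    intervalIntegral.integral_congr fun x hx => by
      rw [uIcc_of_le hhi] at hx
      simp only [max_eq_left hx.1]
      ring
  rw [← intervalIntegral.integral_add_adjacent_intervals (b := 0)
      (hcont.intervalIntegrable _ _) (hcont.intervalIntegrable _ _),
    hleft, hright, integral_affine, integral_affine]
  ring

theorem polar2_Qpoly1_eq (p : ℤ) (hp : 0 < (p : ℝ) + 1) :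
    polar2 (Qpoly1 p) = {y : ℝ × ℝ | y.1 ∈ Icc (-2 / ((p : ℝ) + 1)) 1 ∧
      y.2 ∈ Icc (-1 - p * y.1) (y.1 + 1)} := by
  rw [Qpoly1, polar2_convexHull]
  ext ⟨a, b⟩
  simp only [polar2, mem_insert_iff, mem_singleton_iff, mem_ofPred_eq, forall_eq_or_imp, forall_eq,
    mem_Icc, div_le_iff₀ hp]
  constructor
  · rintro ⟨h1, h2, h3⟩
    refine ⟨⟨?_, ?_⟩, ?_, ?_⟩ <;> linarith
  · rintro ⟨⟨h1, h2⟩, h3, h4⟩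
    refine ⟨?_, ?_, ?_⟩ <;> linarith

theorem polar2_Qpoly2_eq (p : ℤ) (hp : 0 < (p : ℝ) + 1) :
    polar2 (Qpoly2 p) = {y : ℝ × ℝ | y.1 ∈ Icc (-2 / ((p : ℝ) + 1)) 1 ∧
      y.2 ∈ Icc (max (-1 - p * y.1) (-1 - (p - 1) * y.1)) (y.1 + 1)} := by
  rw [Qpoly2, polar2_convexHull]
  ext ⟨a, b⟩
  simp only [polar2, mem_insert_iff, mem_singleton_iff, mem_ofPred_eq, forall_eq_or_imp, forall_eq,
    mem_Icc, div_le_iff₀ hp, max_le_iff]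
  constructor
  · rintro ⟨h1, h2, h3, h4⟩
    refine ⟨⟨?_, ?_⟩, ⟨?_, ?_⟩, ?_⟩ <;> linarith
  · rintro ⟨⟨h1, h2⟩, ⟨h3, h4⟩, h5⟩
    refine ⟨?_, ?_, ?_, ?_⟩ <;> linarith

theorem polar2_Qpoly3_eq (p : ℤ) (hp : 0 < (p : ℝ) + 1) :
    polar2 (Qpoly3 p) = {y : ℝ × ℝ | y.1 ∈ Icc (-2 / ((p : ℝ) + 1)) 1 ∧
      y.2 ∈ Icc (max (-1 - p * y.1) (-1 - (p - 1) * y.1)) (min (y.1 + 1) 1)} := by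
  rw [Qpoly3, polar2_convexHull]
  ext ⟨a, b⟩
  simp only [polar2, mem_insert_iff, mem_singleton_iff, mem_ofPred_eq, forall_eq_or_imp, forall_eq,
    mem_Icc, div_le_iff₀ hp, max_le_iff, le_min_iff]
  constructor
  · rintro ⟨h1, h2, h3, h4, h5⟩
    refine ⟨⟨?_, ?_⟩, ⟨?_, ?_⟩, ?_, ?_⟩ <;> linarith
  · rintro ⟨⟨h1, h2⟩, ⟨h3, h4⟩, h5, h6⟩
    refine ⟨?_, ?_, ?_, ?_, ?_⟩ <;> linarith

theorem volume_region_of_width (p m : ℝ) (hp : 0 < p + 1) (hm : m ≤ p + 3) {f g : ℝ → ℝ}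
    (hf : Measurable f) (hg : Measurable g)
    (hw : ∀ a ∈ Icc (-2 / (p + 1)) 1, g a - f a = (p + 1) * a + 2 - m * max a 0) :
    volume {y : ℝ × ℝ | y.1 ∈ Icc (-2 / (p + 1)) 1 ∧ y.2 ∈ Icc (f y.1) (g y.1)} =
      ENNReal.ofReal ((4 + (p + 1) * (p + 5 - m)) / (2 * (p + 1))) := by
  have hlo : -2 / (p + 1) ≤ 0 := div_nonpos_of_nonpos_of_nonneg (by norm_num) hp.le
  have hnonneg : ∀ a ∈ Icc (-2 / (p + 1)) 1, 0 ≤ (p + 1) * a + 2 - m * max a 0 := by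
    rintro a ⟨ha₁, ha₂⟩
    rw [div_le_iff₀ hp] at ha₁
    rcases le_total a 0 with h | h
    · rw [max_eq_right h]; linarith
    · rw [max_eq_left h]; nlinarith
  rw [Measure.volume_eq_prod, volume_region_between_cc_eq_lintegral hf hg measurableSet_Icc,
    setLIntegral_congr_fun measurableSet_Icc fun a ha => by rw [hw a ha],
    ← ofReal_integral_eq_lintegral_ofReal (by fun_prop : Continuous _).integrableOn_Icc
      ((ae_restrict_iff' measurableSet_Icc).2 (ae_of_all _ hnonneg)),
    integral_Icc_eq_integral_Ioc, ← intervalIntegral.integral_of_le (hlo.trans zero_le_one),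
    integral_affine_sub_mul_max _ _ _ _ _ hlo zero_le_one]
  congr 1
  field_simp
  ring

theorem volume_polar2_Qpoly (p : ℤ) (hp : 0 < (p : ℝ) + 1) (k : ℕ)
    (hk : k ∈ ({1, 2, 3} : Set ℕ)) :
    volume (polar2 (Qpoly p k)) =
      ENNReal.ofReal ((4 + (p + 1) * (p + 6 - k)) / (2 * (p + 1))) := by
  have hmax : ∀ a : ℝ, max (-1 - p * a) (-1 - (p - 1) * a) = -1 - p * a + max a 0 := by
    intro a; simp only [max_def]; split_ifs <;> linarith
  have hmin : ∀ a : ℝ, min (a + 1) 1 = a + 1 - max a 0 := by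
    intro a; simp only [max_def, min_def]; split_ifs <;> linarith
  rcases hk with rfl | rfl | rfl
  · rw [Qpoly, if_pos rfl, polar2_Qpoly1_eq p hp]
    refine (volume_region_of_width p 0 hp (by linarith) (f := fun a => -1 - p * a)
      (g := fun a => a + 1) (by fun_prop) (by fun_prop) fun a _ => by ring).trans ?_
    congr 1; push_cast; ring
  · rw [Qpoly, if_neg (by decide), if_pos rfl, polar2_Qpoly2_eq p hp]
    refine (volume_region_of_width p 1 hp (by linarith)
      (f := fun a => max (-1 - p * a) (-1 - (p - 1) * a)) (g := fun a => a + 1)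
      (by fun_prop) (by fun_prop) fun a _ => by simp only [hmax]; ring).trans ?_
    congr 1; push_cast; ring
  · rw [Qpoly, if_neg (by decide), if_neg (by decide), polar2_Qpoly3_eq p hp]
    refine (volume_region_of_width p 2 hp (by linarith)
      (f := fun a => max (-1 - p * a) (-1 - (p - 1) * a)) (g := fun a => min (a + 1) 1)
      (by fun_prop) (by fun_prop) fun a _ => by simp only [hmax, hmin]; ring).trans ?_
    congr 1; push_cast; ring

theorem ellp_of_odd {p : ℤ} (hp : Odd p) : (ellp p : ℝ) = (p + 1) / 2 := by
  obtain ⟨m, rfl⟩ := hp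
  rw [ellp, if_pos ⟨m, rfl⟩, show (2 * m + 1 + 1) / 2 = m + 1 by omega]
  push_cast
  ring

theorem ellp_of_even {p : ℤ} (hp : Even p) : (ellp p : ℝ) = p + 1 := by
  rw [ellp, if_neg (Int.not_odd_iff_even.2 hp)]
  push_cast
  ring

theorem two_mul_volume_smul_of_volume_eq {s : Set (ℝ × ℝ)} {v : ℝ}
    (hs : volume s = ENNReal.ofReal v) (r : ℝ) : 2 * volume (r • s) = ENNReal.ofReal (2 * r ^ 2 * v) := by
  rw [Measure.addHaar_smul, hs, ← ENNReal.ofReal_mul (by positivity), ← ENNReal.ofReal_ofNat 2,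
    ← ENNReal.ofReal_mul zero_le_two]
  simp only [Module.finrank_prod, Module.finrank_self, Nat.reduceAdd, abs_pow, sq_abs]
  congr 1
  ring

/-- twice the area of ℓ_p·Q̊_p^[k] (the projective degree d_{Q_p^[k]}). -/
theorem stmt12 (p : ℤ) (hp : 1 ≤ p) (k : ℕ) (hk : k ∈ ({1, 2, 3} : Set ℕ)) :
    (Odd p →
      2 * MeasureTheory.volume ((ellp p : ℝ) • polar2 (Qpoly p k)) =
        ENNReal.ofReal (((p : ℝ) + 1) *
          (if k = 1 then ((p : ℝ) + 3) ^ 2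
           else if k = 2 then (p : ℝ) ^ 2 + 5 * p + 8
           else (p : ℝ) ^ 2 + 4 * p + 7) / 4)) ∧
    (Even p →
      2 * MeasureTheory.volume ((ellp p : ℝ) • polar2 (Qpoly p k)) =
        ENNReal.ofReal (((p : ℝ) + 1) *
          (if k = 1 then ((p : ℝ) + 3) ^ 2
           else if k = 2 then (p : ℝ) ^ 2 + 5 * p + 8
           else (p : ℝ) ^ 2 + 4 * p + 7))) := by
  have hp₁ : (0 : ℝ) < p + 1 := by
    have : (1 : ℝ) ≤ p := by exact_mod_cast hp
    linarith
  have hP : (if k = 1 then ((p : ℝ) + 3) ^ 2 else if k = 2 then (p : ℝ) ^ 2 + 5 * p + 8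
      else (p : ℝ) ^ 2 + 4 * p + 7) = 4 + ((p : ℝ) + 1) * (p + 6 - k) := by
    rcases hk with rfl | rfl | rfl <;> norm_num <;> ring
  have hvol := two_mul_volume_smul_of_volume_eq (volume_polar2_Qpoly p hp₁ k hk)
  rw [hP]
  refine ⟨fun hodd => ?_, fun heven => ?_⟩
  · rw [ellp_of_odd hodd, hvol]
    congr 1
    field_simp
    ring
  · rw [ellp_of_even heven, hvol]
    congr 1
    field_simp
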